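/- arXiv:1103.4982 — 2 statements merged into one kernel-verified Lean document; each statement's English description precedes it below -/
import Mathlib

section
/- Let V be a finite type with exactly 6 elements and Γ a connected simple graph on V with exactly 6 edges. Suppose the group Perm(Fin 3) acts on V so that the action preserves adjacency (for all g and all u, v: Γ.Adj u v ↔ Γ.Adj (g • u) (g • v)) and is transitive on V. Fix any element σ of order 3 and any transposition τ in Perm(Fin 3). Then there exists a bijection e : V ≃ ZMod 6 such that for every vertex v one has e(σ • v) = e(v) + 2 and e(τ • v) = 1 − e(v), and for all u, v one has Γ.Adj u v if and only if e(v) = e(u) + 1 or e(u) = e(v) + 1. In particular Γ is a 6-cycle, σ acts as rotation by 2 and τ as a reflection, so up to isomorphism there is only one transitive S₃-action on such a graph. -/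
/-!
Since `|S₃| = |V| = 6`, the transitive action is regular, so `Γ` is the Cayley graph of `S₃`
with connection set `S = {g | v₀ ~ g • v₀}`, which is inverse-closed and avoids `1`.
Vertex-transitivity makes `Γ` regular, and 6 edges on 6 vertices force degree 2, so `|S| = 2`.
If `S` contained a 3-cycle `s`, then `S = {s, s⁻¹} ⊆ A₃` and `Γ` could not be connected;
hence `S` consists of two transpositions, and a finite check over `S₃` produces the labelling.
-/

open Equiv Equiv.Perm Function MulAction Finset

namespace MulAction

variable {G V : Type*} [Group G] [MulAction G V]

lemma bijective_smul_of_card_eq [Fintype G] [Fintype V] [IsPretransitive G V]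
    (hcard : Fintype.card G = Fintype.card V) (v : V) : Bijective (· • v : G → V) :=
  (Fintype.bijective_iff_surjective_and_card _).mpr ⟨exists_smul_eq G v, hcard⟩

end MulAction

namespace SimpleGraph

variable {G V : Type*} [Group G] [MulAction G V] {Γ : SimpleGraph V}

def isoOfSMul (hadj : ∀ (g : G) (u v : V), Γ.Adj u v ↔ Γ.Adj (g • u) (g • v)) (g : G) :
    Γ ≃g Γ :=
  ⟨MulAction.toPerm g, (hadj g _ _).symm⟩

lemma adj_smul_iff (hadj : ∀ (g : G) (u v : V), Γ.Adj u v ↔ Γ.Adj (g • u) (g • v))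
    (v₀ : V) (g h : G) : Γ.Adj (g • v₀) (h • v₀) ↔ Γ.Adj v₀ ((g⁻¹ * h) • v₀) := by
  rw [hadj g⁻¹, inv_smul_smul, mul_smul]

lemma exists_mem_smul_eq_of_preconnected
    (hadj : ∀ (g : G) (u v : V), Γ.Adj u v ↔ Γ.Adj (g • u) (g • v)) [IsPretransitive G V]
    {H : Subgroup G} {v₀ : V} (hH : ∀ g : G, Γ.Adj v₀ (g • v₀) → g ∈ H)
    (hconn : Γ.Preconnected) (w : V) : ∃ h ∈ H, h • v₀ = w := by
  induction (reachable_iff_reflTransGen v₀ w).mp (hconn v₀ w) with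
  | refl => exact ⟨1, H.one_mem, one_smul G v₀⟩
  | @tail u u' _ hadj_last ih =>
    obtain ⟨h, hh, rfl⟩ := ih
    obtain ⟨g, rfl⟩ := exists_smul_eq G v₀ u'
    refine ⟨g, ?_, rfl⟩
    simpa using H.mul_mem hh (hH _ ((adj_smul_iff hadj v₀ h g).mp hadj_last))

variable [Fintype V] [DecidableRel Γ.Adj]

lemma card_mul_degree_eq_two_mul_card_edgeFinset
    (hadj : ∀ (g : G) (u v : V), Γ.Adj u v ↔ Γ.Adj (g • u) (g • v)) [IsPretransitive G V]
    (v : V) : Fintype.card V * Γ.degree v = 2 * #Γ.edgeFinset := by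
  have hreg : ∀ w, Γ.degree w = Γ.degree v := fun w ↦ by
    obtain ⟨g, rfl⟩ := exists_smul_eq G v w
    exact (isoOfSMul hadj g).degree_eq v
  rw [← sum_degrees_eq_twice_card_edges, Finset.sum_congr rfl fun w _ ↦ hreg w, sum_const,
    card_univ, smul_eq_mul]

lemma card_filter_adj_smul_eq_degree [Fintype G] {v₀ : V}
    (hbij : Bijective (· • v₀ : G → V)) : #{g : G | Γ.Adj v₀ (g • v₀)} = Γ.degree v₀ := by
  rw [← card_neighborFinset_eq_degree]
  exact card_equiv (Equiv.ofBijective _ hbij) (by simp)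

end SimpleGraph

open SimpleGraph

lemma inv_ne_self_of_sign_eq_one (s : Perm (Fin 3)) (hs : sign s = 1) (hs₁ : s ≠ 1) :
    s⁻¹ ≠ s := by
  revert s; decide

lemma sign_eq_neg_one_of_adj_smul {V : Type*} [Fintype V] [MulAction (Perm (Fin 3)) V]
    {Γ : SimpleGraph V} [DecidableRel Γ.Adj]
    (hadj : ∀ (g : Perm (Fin 3)) (u v : V), Γ.Adj u v ↔ Γ.Adj (g • u) (g • v))
    [IsPretransitive (Perm (Fin 3)) V] (hconn : Γ.Preconnected) {v₀ : V}
    (hbij : Bijective (· • v₀ : Perm (Fin 3) → V)) (hdeg : Γ.degree v₀ = 2)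
    {s : Perm (Fin 3)} (hs : Γ.Adj v₀ (s • v₀)) : sign s = -1 := by
  by_contra hodd
  replace hodd : sign s = 1 := (Int.units_eq_one_or _).resolve_right hodd
  have hs₁ : s ≠ 1 := by rintro rfl; simp at hs
  have hs_inv : Γ.Adj v₀ (s⁻¹ • v₀) := by
    simpa using (hadj s⁻¹ _ _).mp hs.symm
  have hconn_set : ({g | Γ.Adj v₀ (g • v₀)} : Finset _) = {s, s⁻¹} := by
    refine (Finset.eq_of_subset_of_card_le ?_ ?_).symm
    · simp [Finset.insert_subset_iff, hs, hs_inv]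
    · rw [card_filter_adj_smul_eq_degree hbij, hdeg, card_pair]
      exact (inv_ne_self_of_sign_eq_one s hodd hs₁).symm
  have heven : ∀ g : Perm (Fin 3), Γ.Adj v₀ (g • v₀) → g ∈ alternatingGroup (Fin 3) := by
    intro g hg
    have : g ∈ ({s, s⁻¹} : Finset _) := hconn_set ▸ by simpa using hg
    simp only [Finset.mem_insert, Finset.mem_singleton] at this
    rcases this with rfl | rfl
    · exact hodd
    · rwa [mem_alternatingGroup, sign_inv]
  obtain ⟨h, hh, hswap⟩ :=
    exists_mem_smul_eq_of_preconnected hadj heven hconn (swap (0 : Fin 3) 1 • v₀)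
  rw [hbij.1 hswap, mem_alternatingGroup, sign_swap (by decide)] at hh
  exact absurd hh (by decide)

/-- The labels of `1, σ, σ², τ, στ, σ²τ` forced by `e (σ • v) = e v + 2` and
`e (τ • v) = 1 - e v` once the identity is labelled `c`. -/
def dihedralLabel (σ τ : Perm (Fin 3)) (c : ZMod 6) (g : Perm (Fin 3)) : ZMod 6 :=
  if g = 1 then c else if g = σ then c + 2 else if g = σ * σ then c + 4
  else if g = τ then 1 - c else if g = σ * τ then 3 - c else 5 - c

set_option synthInstance.maxSize 4000 in
lemma exists_dihedralLabel (σ τ t₁ t₂ : Perm (Fin 3)) (hσ : σ ^ 3 = 1) (hσ₁ : σ ≠ 1)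
    (hτ : sign τ = -1) (ht₁ : sign t₁ = -1) (ht₂ : sign t₂ = -1) (ht : t₁ ≠ t₂) :
    ∃ c : ZMod 6, Injective (dihedralLabel σ τ c) ∧
      (∀ g, dihedralLabel σ τ c (σ * g) = dihedralLabel σ τ c g + 2) ∧
      (∀ g, dihedralLabel σ τ c (τ * g) = 1 - dihedralLabel σ τ c g) ∧
      (∀ g h, (g⁻¹ * h = t₁ ∨ g⁻¹ * h = t₂) ↔
        (dihedralLabel σ τ c h = dihedralLabel σ τ c g + 1 ∨
          dihedralLabel σ τ c g = dihedralLabel σ τ c h + 1)) := by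
  revert σ τ t₁ t₂; decide

/-- The unique transitive `S₃`-action on a connected graph with 6 vertices and 6 edges:
the graph is a 6-cycle, `σ` acts as rotation by 2 and `τ` as a reflection. -/
theorem stmt_1 (V : Type*) [Fintype V] (hV : Fintype.card V = 6)
    (Γ : SimpleGraph V) (hconn : Γ.Connected)
    (hedge : Γ.edgeSet.ncard = 6)
    [MulAction (Equiv.Perm (Fin 3)) V]
    (hadj : ∀ (g : Equiv.Perm (Fin 3)) (u v : V), Γ.Adj u v ↔ Γ.Adj (g • u) (g • v))
    (htrans : MulAction.IsPretransitive (Equiv.Perm (Fin 3)) V)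
    (σ : Equiv.Perm (Fin 3)) (hσ : orderOf σ = 3)
    (τ : Equiv.Perm (Fin 3)) (hτ : τ.IsSwap) :
    ∃ e : V ≃ ZMod 6,
      (∀ v : V, e (σ • v) = e v + 2) ∧
      (∀ v : V, e (τ • v) = 1 - e v) ∧
      (∀ u v : V, Γ.Adj u v ↔ (e v = e u + 1 ∨ e u = e v + 1)) := by
  classical
  obtain ⟨v₀⟩ : Nonempty V := Fintype.card_pos_iff.mp (by omega)
  have hbij : Bijective (· • v₀ : Perm (Fin 3) → V) :=
    bijective_smul_of_card_eq (by rw [hV]; rfl) v₀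
  have hdeg : Γ.degree v₀ = 2 := by
    have := card_mul_degree_eq_two_mul_card_edgeFinset hadj v₀
    rw [hV, edgeFinset, ← Set.ncard_eq_toFinset_card', hedge] at this
    omega
  obtain ⟨t₁, t₂, ht, hS⟩ :=
    card_eq_two.mp ((card_filter_adj_smul_eq_degree hbij).trans hdeg)
  have hodd {t} (h : t ∈ ({t₁, t₂} : Finset _)) : sign t = -1 :=
    sign_eq_neg_one_of_adj_smul hadj hconn.preconnected hbij hdeg (by simpa [← hS] using h)
  obtain ⟨c, hinj, hlabel_σ, hlabel_τ, hlabel_adj⟩ := exists_dihedralLabel σ τ t₁ t₂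
    (by simpa [hσ] using pow_orderOf_eq_one σ) (by rintro rfl; simp at hσ) hτ.sign_eq
    (hodd (by simp)) (hodd (by simp)) ht
  let φ := Equiv.ofBijective _ hbij
  let f := Equiv.ofBijective _ ((Fintype.bijective_iff_injective_and_card _).mpr ⟨hinj, rfl⟩)
  have hφ (a g) : a • φ g = φ (a * g) := (mul_smul a g v₀).symm
  refine ⟨φ.symm.trans f, fun v ↦ ?_, fun v ↦ ?_, fun u v ↦ ?_⟩
  · obtain ⟨g, rfl⟩ := φ.surjective v
    simpa [hφ, f] using hlabel_σ g
  · obtain ⟨g, rfl⟩ := φ.surjective v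
    simpa [hφ, f] using hlabel_τ g
  · obtain ⟨g, rfl⟩ := φ.surjective u
    obtain ⟨h, rfl⟩ := φ.surjective v
    have hmem := Finset.ext_iff.mp hS (g⁻¹ * h)
    simp only [Finset.mem_filter, Finset.mem_univ, true_and, Finset.mem_insert,
      Finset.mem_singleton] at hmem
    change Γ.Adj (g • v₀) (h • v₀) ↔ _
    simpa [f, ← hlabel_adj, ← hmem] using adj_smul_iff hadj v₀ g h
end

section
/- Let ζ ∈ ℂ with ζ³ = 1 and ζ ≠ 1, and let a, b ∈ ℂ with b ≠ 0. Define F(z₀, z₁, z₂) = z₀³z₂ + z₁³z₂ + z₀²z₁² + a·z₀z₁z₂² + b·z₂⁴. Suppose (z₀, z₁, z₂) ∈ ℂ³ with (z₀, z₁, z₂) ≠ (0,0,0), F(z₀, z₁, z₂) = 0, and there exists λ ∈ ℂ with (ζz₀, ζ²z₁, z₂) = (λz₀, λz₁, λz₂). Then either z₁ = 0 and z₂ = 0, or z₀ = 0 and z₂ = 0. -/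
theorem pow_two_ne_one_of_pow_three_eq_one {M : Type*} [Monoid M] {ζ : M} (h3 : ζ ^ 3 = 1)
    (h1 : ζ ≠ 1) : ζ ^ 2 ≠ 1 := by
  intro h2
  apply h1
  rw [← h3, pow_succ, h2, one_mul]

theorem stmt_4_general (ζ a b : ℂ) (hζ3 : ζ ^ 3 = 1) (hζ : ζ ≠ 1) (hb : b ≠ 0)
    (z₀ z₁ z₂ : ℂ)
    (hF : z₀ ^ 3 * z₂ + z₁ ^ 3 * z₂ + z₀ ^ 2 * z₁ ^ 2 + a * z₀ * z₁ * z₂ ^ 2 + b * z₂ ^ 4 = 0)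
    (hfix : ∃ l : ℂ, (ζ * z₀, ζ ^ 2 * z₁, z₂) = (l * z₀, l * z₁, l * z₂)) :
    (z₁ = 0 ∧ z₂ = 0) ∨ (z₀ = 0 ∧ z₂ = 0) := by
  obtain ⟨l, h₀, h₁, h₂⟩ : ∃ l : ℂ, ζ * z₀ = l * z₀ ∧ ζ ^ 2 * z₁ = l * z₁ ∧ z₂ = l * z₂ := by
    simpa only [Prod.mk.injEq] using hfix
  rcases eq_or_ne z₂ 0 with rfl | hz₂
  · have hz₀z₁ : z₀ ^ 2 * z₁ ^ 2 = 0 := by linear_combination hF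
    simp only [mul_eq_zero, pow_eq_zero_iff two_ne_zero] at hz₀z₁
    tauto
  · obtain rfl : l = 1 := (mul_eq_right₀ hz₂).1 h₂.symm
    rw [one_mul] at h₀ h₁
    have hz₀ : z₀ = 0 := (mul_left_eq_self₀.1 h₀).resolve_left hζ
    have hz₁ : z₁ = 0 :=
      (mul_left_eq_self₀.1 h₁).resolve_left (pow_two_ne_one_of_pow_three_eq_one hζ3 hζ)
    subst hz₀ hz₁
    have hbz₂ : b * z₂ ^ 4 = 0 := by linear_combination hF
    exact absurd hbz₂ (mul_ne_zero hb (pow_ne_zero 4 hz₂))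

/-- The fixed points of `σ : (z₀ : z₁ : z₂) ↦ (ζz₀ : ζ²z₁ : z₂)` on the quartic curve
`F = 0` are `(1:0:0)` and `(0:1:0)`. -/
theorem stmt_4 (ζ a b : ℂ) (hζ3 : ζ ^ 3 = 1) (hζ : ζ ≠ 1) (hb : b ≠ 0)
    (z₀ z₁ z₂ : ℂ) (hz : (z₀, z₁, z₂) ≠ (0, 0, 0))
    (hF : z₀ ^ 3 * z₂ + z₁ ^ 3 * z₂ + z₀ ^ 2 * z₁ ^ 2 + a * z₀ * z₁ * z₂ ^ 2 + b * z₂ ^ 4 = 0)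
    (hfix : ∃ l : ℂ, (ζ * z₀, ζ ^ 2 * z₁, z₂) = (l * z₀, l * z₁, l * z₂)) :
    (z₁ = 0 ∧ z₂ = 0) ∨ (z₀ = 0 ∧ z₂ = 0) :=
  stmt_4_general ζ a b hζ3 hζ hb z₀ z₁ z₂ hF hfix
end
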